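/- arXiv:2106.10238 — 4 statements merged into one kernel-verified Lean document; each statement's English description precedes it below -/
import Mathlib

section
/- For every natural number n, every measurable function g : (Fin n → ℝ) → (Fin n → ℝ), every step size ε ∈ ℝ, and every number of steps L ∈ ℕ, the leapfrog integrator Ψ = S ∘ A_ε^{∘L} is volume preserving: the pushforward of the product of Lebesgue measures on the phase space (Fin n → ℝ) × (Fin n → ℝ) along Ψ equals the product of Lebesgue measures. -/
/-! Each of the two shears moves one coordinate by a translation depending only on the other
coordinate, so by Fubini it preserves any product of a σ-finite measure with a translation
invariant one; the flip negates one factor, which preserves Lebesgue measure. The leapfrog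
integrator is a composition of these maps. -/

open MeasureTheory

section Shear

variable {α G : Type*} [MeasurableSpace α] [MeasurableSpace G] [Add G] [MeasurableAdd₂ G]
  {μ : Measure α} {ν : Measure G} [SFinite μ] [SFinite ν] [ν.IsAddRightInvariant]

theorem measurePreserving_shear_snd {f : α → G} (hf : Measurable f) :
    MeasurePreserving (fun z : α × G => (z.1, z.2 + f z.1)) (μ.prod ν) (μ.prod ν) :=
  (MeasurePreserving.id μ).skew_product (g := fun a b => b + f a)
    (measurable_snd.add (hf.comp measurable_fst))
    (Filter.Eventually.of_forall fun a => map_add_right_eq_self ν (f a))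

theorem measurePreserving_shear_fst {f : α → G} (hf : Measurable f) :
    MeasurePreserving (fun z : G × α => (z.1 + f z.2, z.2)) (ν.prod μ) (ν.prod μ) :=
  (Measure.measurePreserving_swap.comp (measurePreserving_shear_snd hf)).comp
    Measure.measurePreserving_swap

end Shear

theorem stmt_4 (n : ℕ) (g : (Fin n → ℝ) → (Fin n → ℝ)) (hg : Measurable g) (ε : ℝ) (L : ℕ) :
    let φP : ℝ → ((Fin n → ℝ) × (Fin n → ℝ)) → ((Fin n → ℝ) × (Fin n → ℝ)) :=
      fun k x => (x.1, x.2 - k • g x.1)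
    let φQ : ℝ → ((Fin n → ℝ) × (Fin n → ℝ)) → ((Fin n → ℝ) × (Fin n → ℝ)) :=
      fun k x => (x.1 + k • x.2, x.2)
    let S : ((Fin n → ℝ) × (Fin n → ℝ)) → ((Fin n → ℝ) × (Fin n → ℝ)) :=
      fun x => (x.1, -x.2)
    let A : ((Fin n → ℝ) × (Fin n → ℝ)) → ((Fin n → ℝ) × (Fin n → ℝ)) :=
      φP (ε/2) ∘ φQ ε ∘ φP (ε/2)
    let Ψ : ((Fin n → ℝ) × (Fin n → ℝ)) → ((Fin n → ℝ) × (Fin n → ℝ)) :=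
      S ∘ A^[L]
    Measure.map Ψ ((volume : Measure (Fin n → ℝ)).prod (volume : Measure (Fin n → ℝ))) =
      (volume : Measure (Fin n → ℝ)).prod (volume : Measure (Fin n → ℝ)) := by
  intro φP φQ S A Ψ
  set μ : Measure (Fin n → ℝ) := volume
  have hP (k : ℝ) : MeasurePreserving (φP k) (μ.prod μ) (μ.prod μ) := by
    simpa only [φP, sub_eq_add_neg] using
      measurePreserving_shear_snd (f := fun q => -(k • g q)) (hg.const_smul k).neg
  have hQ : MeasurePreserving (φQ ε) (μ.prod μ) (μ.prod μ) :=
    measurePreserving_shear_fst (measurable_const_smul ε)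
  have hS : MeasurePreserving S (μ.prod μ) (μ.prod μ) :=
    (MeasurePreserving.id μ).prod (Measure.measurePreserving_neg μ)
  have hA : MeasurePreserving A (μ.prod μ) (μ.prod μ) := (hP _).comp (hQ.comp (hP _))
  exact (hS.comp (hA.iterate L)).map_eq
end

section
/- Let q⁰, p⁰ ∈ Fin n → ℝ, ε ∈ ℝ, and let (qⁱ, pⁱ) for i = 0, 1, 2, … be the leapfrog trajectory with step size ε started at (q⁰, p⁰). Then for every L ≥ 1, the position after L leapfrog steps satisfies the closed form q^L = q⁰ + ε·L • p⁰ - ε² • ( (L/2) • g(q⁰) + ∑_{k=1}^{L-1} k • g(q^{L-k}) ). -/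
/-!
Write `rⁱ = pⁱ - (ε/2) • g qⁱ` for the half-step momentum `p^{i+1/2}`. The leapfrog recursion
says exactly that `q^{i+1} = qⁱ + ε • rⁱ` and `r^{i+1} = rⁱ - ε • g q^{i+1}`, so both sequences
telescope: `rⁱ = r⁰ - ε • ∑_{j<i} g q^{j+1}` and `q^L = q⁰ + ε • ∑_{i<L} rⁱ`. Exchanging the
order of the resulting double sum gives the weights `k` of `g q^{L-k}`.
-/

/-- The leapfrog trajectory with step size `ε` started at `x = (q⁰, p⁰)`:
`q^{i+1} = qⁱ + ε • (pⁱ - (ε/2) • g qⁱ)` and `p^{i+1} = pⁱ - (ε/2) • (g qⁱ + g q^{i+1})`. -/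
noncomputable def leapfrog {n : ℕ} (g : (Fin n → ℝ) → (Fin n → ℝ)) (ε : ℝ)
    (x : (Fin n → ℝ) × (Fin n → ℝ)) : ℕ → (Fin n → ℝ) × (Fin n → ℝ)
  | 0 => x
  | i + 1 =>
    let q := (leapfrog g ε x i).1
    let p := (leapfrog g ε x i).2
    let q' := q + ε • (p - (ε / 2) • g q)
    (q', p - (ε / 2) • (g q + g q'))

theorem Finset.sum_range_sum_range_succ {M : Type*} [AddCommMonoid M] (f : ℕ → M) (L : ℕ) :
    ∑ i ∈ range L, ∑ j ∈ range i, f (j + 1) = ∑ k ∈ range L, k • f (L - k) := by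
  induction L with
  | zero => simp
  | succ L ih =>
    have hreflect : ∑ j ∈ range L, f (j + 1) = ∑ k ∈ range L, f (L - k) := by
      rw [← sum_range_reflect]
      exact sum_congr rfl fun k hk => by rw [mem_range] at hk; congr 1; omega
    rw [sum_range_succ, ih, hreflect, sum_range_succ', ← sum_add_distrib]
    simp only [succ_nsmul, zero_smul, add_zero, Nat.add_sub_add_right]

theorem Finset.sum_Icc_cast_smul_eq_sum_range_sum_range {R M : Type*} [Semiring R]
    [AddCommMonoid M] [Module R M] (f : ℕ → M) (L : ℕ) :
    ∑ k ∈ Icc 1 (L - 1), (k : R) • f (L - k) = ∑ i ∈ range L, ∑ j ∈ range i, f (j + 1) := by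
  rw [sum_range_sum_range_succ]
  simp only [Nat.cast_smul_eq_nsmul]
  refine sum_subset (fun k hk => ?_) (fun k hk hk' => ?_)
  · simp only [mem_Icc, mem_range] at hk ⊢
    omega
  · obtain rfl : k = 0 := by simp only [mem_Icc, mem_range] at hk hk'; omega
    exact zero_smul ℕ _

namespace leapfrog

variable {n : ℕ} (g : (Fin n → ℝ) → (Fin n → ℝ)) (ε : ℝ) (x : (Fin n → ℝ) × (Fin n → ℝ))

noncomputable def halfMomentum (i : ℕ) : Fin n → ℝ :=
  (leapfrog g ε x i).2 - (ε / 2) • g (leapfrog g ε x i).1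

theorem fst_succ (i : ℕ) :
    (leapfrog g ε x (i + 1)).1 = (leapfrog g ε x i).1 + ε • halfMomentum g ε x i :=
  rfl

theorem halfMomentum_succ (i : ℕ) :
    halfMomentum g ε x (i + 1) = halfMomentum g ε x i - ε • g (leapfrog g ε x (i + 1)).1 := by
  simp only [halfMomentum, leapfrog]
  module

theorem halfMomentum_eq_sub_sum (i : ℕ) :
    halfMomentum g ε x i =
      x.2 - (ε / 2) • g x.1 - ε • ∑ j ∈ Finset.range i, g (leapfrog g ε x (j + 1)).1 := by
  induction i with
  | zero => simp [halfMomentum, leapfrog]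
  | succ i ih => rw [halfMomentum_succ, ih, Finset.sum_range_succ, smul_add, sub_sub]

theorem fst_eq_add_sum_halfMomentum (L : ℕ) :
    (leapfrog g ε x L).1 = x.1 + ε • ∑ i ∈ Finset.range L, halfMomentum g ε x i := by
  have htelescope := Finset.sum_range_sub (fun i => (leapfrog g ε x i).1) L
  simp only [fst_succ, add_sub_cancel_left, ← Finset.smul_sum] at htelescope
  exact eq_add_of_sub_eq' htelescope.symm

end leapfrog

theorem stmt_5_general (n : ℕ) (g : (Fin n → ℝ) → (Fin n → ℝ)) (ε : ℝ)
    (q0 p0 : Fin n → ℝ) (L : ℕ) :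
    (leapfrog g ε (q0, p0) L).1 =
      q0 + (ε * L) • p0 -
        ε ^ 2 • (((L : ℝ) / 2) • g q0 +
          ∑ k ∈ Finset.Icc 1 (L - 1), (k : ℝ) • g ((leapfrog g ε (q0, p0) (L - k)).1)) := by
  rw [Finset.sum_Icc_cast_smul_eq_sum_range_sum_range (fun j => g (leapfrog g ε (q0, p0) j).1),
    leapfrog.fst_eq_add_sum_halfMomentum]
  simp only [leapfrog.halfMomentum_eq_sub_sum, Finset.sum_sub_distrib, Finset.sum_const, Finset.card_range,
    ← Finset.smul_sum]
  module

theorem stmt_5 (n : ℕ) (g : (Fin n → ℝ) → (Fin n → ℝ)) (ε : ℝ)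
    (q0 p0 : Fin n → ℝ) (L : ℕ) (hL : 1 ≤ L) :
    (leapfrog g ε (q0, p0) L).1 =
      q0 + (ε * L) • p0 -
        ε ^ 2 • (((L : ℝ) / 2) • g q0 +
          ∑ k ∈ Finset.Icc 1 (L - 1), (k : ℝ) • g ((leapfrog g ε (q0, p0) (L - k)).1)) :=
  stmt_5_general n g ε q0 p0 L
end

section
/- Let ε > 0, L ≥ 1, and suppose the coordinates of g are uniformly bounded: there are reals M₁ ≤ M₂ with M₁ ≤ (g x) i ≤ M₂ for all x ∈ Fin n → ℝ and all i. Let a, b : Fin n → ℝ and q⁰ ∈ Fin n → ℝ. If the initial momentum p⁰ satisfies, for every coordinate i, p⁰ i ∈ ( (a i - q⁰ i + ((εL)²/2)·M₂)/(εL) , (b i - q⁰ i + ((εL)²/2)·M₁)/(εL) ), then the position q^L after L leapfrog steps of the trajectory started at (q⁰, p⁰) satisfies a i < q^L i < b i for every coordinate i. -/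
section
variable {n : ℕ} {ε : ℝ}

theorem leapfrog_const (c : Fin n → ℝ) (x : (Fin n → ℝ) × (Fin n → ℝ)) (k : ℕ) :
    leapfrog (fun _ ↦ c) ε x k =
      (x.1 + (k * ε) • x.2 - ((k * ε) ^ 2 / 2) • c, x.2 - (k * ε) • c) := by
  induction k with
  | zero => simp [leapfrog]
  | succ k ih =>
    simp only [leapfrog, ih, Prod.mk.injEq]
    constructor <;> ext i <;> simp only [Pi.add_apply, Pi.sub_apply, Pi.smul_apply, smul_eq_mul,
      Nat.cast_succ] <;> ring

theorem leapfrog_le_leapfrog {g h : (Fin n → ℝ) → (Fin n → ℝ)} (hε : 0 ≤ ε)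
    (hgh : ∀ y z, h y ≤ g z) (x : (Fin n → ℝ) × (Fin n → ℝ)) (k : ℕ) :
    leapfrog g ε x k ≤ leapfrog h ε x k := by
  induction k with
  | zero => rfl
  | succ k ih =>
    obtain ⟨hq, hp⟩ := ih
    constructor <;> dsimp only [leapfrog] <;> gcongr <;> exact hgh _ _

end

theorem stmt_7_general (n : ℕ) (g : (Fin n → ℝ) → (Fin n → ℝ)) (ε : ℝ) (hε : 0 < ε)
    (L : ℕ) (hL : 1 ≤ L) (M₁ M₂ : ℝ)
    (hbound : ∀ (x : Fin n → ℝ) (i : Fin n), M₁ ≤ g x i ∧ g x i ≤ M₂)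
    (a b q0 p0 : Fin n → ℝ)
    (hp : ∀ i : Fin n,
      (a i - q0 i + ((ε * L) ^ 2 / 2) * M₂) / (ε * L) < p0 i ∧
      p0 i < (b i - q0 i + ((ε * L) ^ 2 / 2) * M₁) / (ε * L)) :
    ∀ i : Fin n,
      a i < (leapfrog g ε (q0, p0) L).1 i ∧ (leapfrog g ε (q0, p0) L).1 i < b i := by
  intro i
  have hεL : 0 < ε * L := mul_pos hε (by exact_mod_cast hL)
  obtain ⟨ha, hb⟩ := hp i
  rw [div_lt_iff₀ hεL] at ha
  rw [lt_div_iff₀ hεL] at hb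
  have upper := (leapfrog_le_leapfrog hε.le (h := fun _ _ ↦ M₁) (fun _ z ↦ (hbound z · |>.1))
    (q0, p0) L).1 i
  have lower := (leapfrog_le_leapfrog hε.le (g := fun _ _ ↦ M₂) (fun y _ ↦ (hbound y · |>.2))
    (q0, p0) L).1 i
  simp only [leapfrog_const, Pi.add_apply, Pi.sub_apply, Pi.smul_apply, smul_eq_mul] at upper lower
  constructor <;> linarith

theorem stmt_7 (n : ℕ) (g : (Fin n → ℝ) → (Fin n → ℝ)) (ε : ℝ) (hε : 0 < ε)
    (L : ℕ) (hL : 1 ≤ L) (M₁ M₂ : ℝ) (hM : M₁ ≤ M₂)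
    (hbound : ∀ (x : Fin n → ℝ) (i : Fin n), M₁ ≤ g x i ∧ g x i ≤ M₂)
    (a b q0 p0 : Fin n → ℝ)
    (hp : ∀ i : Fin n,
      (a i - q0 i + ((ε * L) ^ 2 / 2) * M₂) / (ε * L) < p0 i ∧
      p0 i < (b i - q0 i + ((ε * L) ^ 2 / 2) * M₁) / (ε * L)) :
    ∀ i : Fin n,
      a i < (leapfrog g ε (q0, p0) L).1 i ∧ (leapfrog g ε (q0, p0) L).1 i < b i :=
  stmt_7_general n g ε hε L hL M₁ M₂ hbound a b q0 p0 hp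
end

section
/- Let d ∈ ℕ, let T : (Fin d → ℝ) → (Fin d → ℝ) be a measurable map that is an involution (T ∘ T = id) and preserves Lebesgue measure (the pushforward of Lebesgue measure along T equals Lebesgue measure), and let ρ : (Fin d → ℝ) → ℝ be a nonnegative measurable Lebesgue-integrable function. Define the acceptance probability α(x) = min(1, ρ(T x)/ρ(x)) if ρ(x) > 0 and α(x) = 0 otherwise. Then the Metropolis–Hastings step with deterministic proposal T leaves the measure with density ρ invariant: for every Lebesgue-measurable set X, ∫ ( α(x)·1_X(T x) + (1 - α(x))·1_X(x) )·ρ(x) dx = ∫_X ρ(x) dx, where both integrals are with respect to Lebesgue measure on Fin d → ℝ. -/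
/-!
Write `g x = α x ρ x = min (ρ x, ρ (T x))` for the probability flux from `x` to `T x`.
Since `T` is an involution, `g ∘ T = g` (detailed balance), so the mass moved into `X`,
`∫ g · 1_X ∘ T = ∫ (1_X · g) ∘ T`, equals by invariance of the measure the mass moved out of `X`,
`∫ g · 1_X`; hence the step preserves `∫_X ρ`.
-/

open MeasureTheory

/-- The Metropolis–Hastings acceptance probability for the deterministic proposal `T`
and target density `ρ`: `α x = min(1, ρ(T x)/ρ(x))` if `ρ x > 0`, and `0` otherwise. -/
noncomputable def mhAccept {d : ℕ} (T : (Fin d → ℝ) → (Fin d → ℝ))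
    (ρ : (Fin d → ℝ) → ℝ) (x : Fin d → ℝ) : ℝ :=
  if 0 < ρ x then min 1 (ρ (T x) / ρ x) else 0

theorem integral_mhStep_eq_setIntegral {α : Type*} [MeasurableSpace α] {μ : Measure α}
    {T : α → α} (hT : MeasurePreserving T μ μ) {a ρ : α → ℝ}
    (hbalance : ∀ x, a (T x) * ρ (T x) = a x * ρ x)
    (haρ : Integrable (fun x => a x * ρ x) μ) (hρ : Integrable ρ μ)
    {X : Set α} (hX : MeasurableSet X) :
    ∫ x, (a x * X.indicator (fun _ => (1 : ℝ)) (T x) +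
          (1 - a x) * X.indicator (fun _ => (1 : ℝ)) x) * ρ x ∂μ =
      ∫ x in X, ρ x ∂μ := by
  set g : α → ℝ := X.indicator fun x => a x * ρ x
  have hpointwise : ∀ x, (a x * X.indicator (fun _ => (1 : ℝ)) (T x) +
      (1 - a x) * X.indicator (fun _ => (1 : ℝ)) x) * ρ x =
      g (T x) + (X.indicator ρ x - g x) := by
    intro x
    by_cases hTx : T x ∈ X <;> by_cases hx : x ∈ X <;>
      simp [g, hTx, hx, hbalance, sub_mul]
  have hg : Integrable g μ := haρ.indicator hX
  have hgT : Integrable (fun x => g (T x)) μ :=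
    (hT.map_eq ▸ hg).comp_measurable hT.measurable
  have hmoved : ∫ x, g (T x) ∂μ = ∫ x, g x ∂μ := by
    rw [← integral_map hT.aemeasurable (by rw [hT.map_eq]; exact hg.aestronglyMeasurable),
      hT.map_eq]
  have hρX : Integrable (X.indicator ρ) μ := hρ.indicator hX
  have hstay : Integrable (fun x => X.indicator ρ x - g x) μ := hρX.sub hg
  rw [integral_congr_ae (ae_of_all _ hpointwise), integral_add hgT hstay,
    integral_sub hρX hg, hmoved, integral_indicator (f := ρ) hX]
  ring

theorem mhAccept_mul_self {d : ℕ} {T : (Fin d → ℝ) → (Fin d → ℝ)}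
    {ρ : (Fin d → ℝ) → ℝ} (hρ0 : ∀ x, 0 ≤ ρ x) (x : Fin d → ℝ) :
    mhAccept T ρ x * ρ x = min (ρ x) (ρ (T x)) := by
  rcases (hρ0 x).lt_or_eq with hpos | hzero
  · rw [mhAccept, if_pos hpos, min_mul_of_nonneg _ _ hpos.le, one_mul,
      div_mul_cancel₀ _ hpos.ne']
  · simp [mhAccept, ← hzero, hρ0 (T x)]

theorem stmt_12_general (d : ℕ) (T : (Fin d → ℝ) → (Fin d → ℝ)) (hT : Measurable T)
    (hTT : T ∘ T = id)
    (hTvol : Measure.map T (volume : Measure (Fin d → ℝ)) = volume)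
    (ρ : (Fin d → ℝ) → ℝ) (hρ0 : ∀ x, 0 ≤ ρ x)
    (hρint : Integrable ρ (volume : Measure (Fin d → ℝ)))
    (X : Set (Fin d → ℝ)) (hX : MeasurableSet X) :
    ∫ x, (mhAccept T ρ x * X.indicator (fun _ => (1 : ℝ)) (T x) +
          (1 - mhAccept T ρ x) * X.indicator (fun _ => (1 : ℝ)) x) * ρ x =
      ∫ x in X, ρ x := by
  have hTmp : MeasurePreserving T volume volume := ⟨hT, hTvol⟩
  have hflux : (fun x => mhAccept T ρ x * ρ x) = fun x => min (ρ x) (ρ (T x)) :=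
    funext (mhAccept_mul_self hρ0)
  refine integral_mhStep_eq_setIntegral hTmp (fun x => ?_) ?_ hρint hX
  · have hTTx : T (T x) = x := congrFun hTT x
    rw [mhAccept_mul_self hρ0, mhAccept_mul_self hρ0, hTTx, min_comm]
  · rw [hflux]
    exact hρint.inf ((hTvol ▸ hρint).comp_measurable hT)

theorem stmt_12 (d : ℕ) (T : (Fin d → ℝ) → (Fin d → ℝ)) (hT : Measurable T)
    (hTT : T ∘ T = id)
    (hTvol : Measure.map T (volume : Measure (Fin d → ℝ)) = volume)
    (ρ : (Fin d → ℝ) → ℝ) (hρm : Measurable ρ) (hρ0 : ∀ x, 0 ≤ ρ x)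
    (hρint : Integrable ρ (volume : Measure (Fin d → ℝ)))
    (X : Set (Fin d → ℝ)) (hX : MeasurableSet X) :
    ∫ x, (mhAccept T ρ x * X.indicator (fun _ => (1 : ℝ)) (T x) +
          (1 - mhAccept T ρ x) * X.indicator (fun _ => (1 : ℝ)) x) * ρ x =
      ∫ x in X, ρ x :=
  stmt_12_general d T hT hTT hTvol ρ hρ0 hρint X hX
end
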